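/- For every natural number d there exist integers q₁, …, q_{d+1} such that for all real λ ≠ 0: (e^λ − e^{−λ})^{−1} · iteratedDeriv (2d+1) (fun x => 2/(Real.exp (2x) − 1)) λ = Σ_{j=1}^{d+1} q_j / (e^λ − e^{−λ})^{2j+1}. -/

import Mathlib

/-!
For `x ≠ 0` we have `2 / (e^{2x} - 1) = coth x - 1`. With `w = sinh⁻²` one has `coth' = -w`,
`w' = -2 coth · w` and `coth² = 1 + w`, so the odd derivatives are integer polynomials in `w`
and the even ones are `coth` times integer polynomials in `w`; each pair of derivatives raises
the degree by at most one and produces a factor `w`. Finally `e^λ - e^{-λ} = 2 sinh λ` turns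
`w^j / (e^λ - e^{-λ})` into `4^j / (e^λ - e^{-λ})^{2j+1}`.
-/

open Polynomial Real

theorem iteratedDeriv_succ_eqOn_of_hasDerivAt {𝕜 F : Type*} [NontriviallyNormedField 𝕜]
    [NormedAddCommGroup F] [NormedSpace 𝕜 F] {f g g' : 𝕜 → F} {s : Set 𝕜} {n : ℕ}
    (hs : IsOpen s) (hf : Set.EqOn (iteratedDeriv n f) g s)
    (hg : ∀ x ∈ s, HasDerivAt g (g' x) x) :
    Set.EqOn (iteratedDeriv (n + 1) f) g' s := fun x hx => by
  rw [iteratedDeriv_succ]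
  exact ((hg x hx).congr_of_eventuallyEq (Filter.eventually_of_mem (hs.mem_nhds hx) hf)).deriv

theorem two_div_exp_two_mul_sub_one_eq {x : ℝ} (hx : x ≠ 0) :
    2 / (exp (2 * x) - 1) = cosh x / sinh x - 1 := by
  have hs : exp x - exp (-x) ≠ 0 := by
    rw [sub_ne_zero, Ne, exp_eq_exp]; intro h; exact hx (by linarith)
  have he : exp (2 * x) - 1 = exp x * (exp x - exp (-x)) := by
    rw [mul_sub, ← exp_add, ← exp_add, two_mul, add_neg_cancel, exp_zero]
  rw [sinh_eq, cosh_eq, he]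
  field_simp
  rw [exp_neg]; field_simp; ring

theorem hasDerivAt_coth {x : ℝ} (hx : x ≠ 0) :
    HasDerivAt (fun y => cosh y / sinh y) (-(sinh x ^ 2)⁻¹) x := by
  refine ((hasDerivAt_cosh x).div (hasDerivAt_sinh x) (sinh_ne_zero.2 hx)).congr_deriv ?_
  rw [← sq, ← sq, cosh_sq]
  ring

theorem hasDerivAt_inv_sinh_sq {x : ℝ} (hx : x ≠ 0) :
    HasDerivAt (fun y => (sinh y ^ 2)⁻¹) (-2 * (cosh x / sinh x) * (sinh x ^ 2)⁻¹) x := by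
  have hs := sinh_ne_zero.2 hx
  refine (((hasDerivAt_sinh x).fun_pow 2).inv (pow_ne_zero 2 hs)).congr_deriv ?_
  field_simp
  ring

theorem coth_sq {x : ℝ} (hx : x ≠ 0) : (cosh x / sinh x) ^ 2 = 1 + (sinh x ^ 2)⁻¹ := by
  have hs := sinh_ne_zero.2 hx
  rw [div_pow, cosh_sq]
  field_simp

section CschSqPolynomial

variable {A : Type*} [CommRing A]

noncomputable def derivOfComp (p : A[X]) : A[X] := -2 * X * derivative p

noncomputable def derivOfCothMul (p : A[X]) : A[X] := X * (-p - 2 * (1 + X) * derivative p)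

theorem coeff_derivOfCothMul_zero (p : A[X]) : (derivOfCothMul p).coeff 0 = 0 := by
  simp [derivOfCothMul]

theorem natDegree_derivOfComp_le {p : A[X]} {n : ℕ} (hp : p.natDegree ≤ n + 1) :
    (derivOfComp p).natDegree ≤ n + 1 := by
  have h2X : (-2 * X : A[X]).natDegree ≤ 1 := by compute_degree
  have hp' : (derivative p).natDegree ≤ n := (natDegree_derivative_le p).trans (by omega)
  exact (natDegree_mul_le_of_le h2X hp').trans (by omega)

theorem natDegree_derivOfCothMul_le {p : A[X]} {n : ℕ} (hp : p.natDegree ≤ n + 1) :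
    (derivOfCothMul p).natDegree ≤ n + 2 := by
  have h2X : (2 * (1 + X) : A[X]).natDegree ≤ 1 := by compute_degree
  have hp' : (derivative p).natDegree ≤ n := (natDegree_derivative_le p).trans (by omega)
  have hq : (-p - 2 * (1 + X) * derivative p).natDegree ≤ n + 1 := by
    refine (natDegree_sub_le_of_le (natDegree_neg p ▸ hp)
      (natDegree_mul_le_of_le h2X hp')).trans ?_
    omega
  exact (natDegree_mul_le_of_le natDegree_X_le hq).trans (by omega)

variable [Algebra A ℝ]

theorem hasDerivAt_aeval_inv_sinh_sq (p : A[X]) {x : ℝ} (hx : x ≠ 0) :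
    HasDerivAt (fun y => aeval (sinh y ^ 2)⁻¹ p)
      (cosh x / sinh x * aeval (sinh x ^ 2)⁻¹ (derivOfComp p)) x := by
  refine ((p.hasDerivAt_aeval _).comp x (hasDerivAt_inv_sinh_sq hx)).congr_deriv ?_
  simp only [derivOfComp, map_mul, map_neg, map_ofNat, aeval_X]
  ring

theorem hasDerivAt_coth_mul_aeval_inv_sinh_sq (p : A[X]) {x : ℝ} (hx : x ≠ 0) :
    HasDerivAt (fun y => cosh y / sinh y * aeval (sinh y ^ 2)⁻¹ p)
      (aeval (sinh x ^ 2)⁻¹ (derivOfCothMul p)) x := by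
  refine ((hasDerivAt_coth hx).mul
    ((p.hasDerivAt_aeval _).comp x (hasDerivAt_inv_sinh_sq hx))).congr_deriv ?_
  simp only [derivOfCothMul, Function.comp_apply, map_mul, map_neg, map_sub, map_add, map_one,
    map_ofNat, aeval_X]
  linear_combination (-2 * (sinh x ^ 2)⁻¹ * aeval (sinh x ^ 2)⁻¹ (derivative p)) * coth_sq hx

end CschSqPolynomial

noncomputable def oddDerivPoly : ℕ → ℤ[X]
  | 0 => -X
  | d + 1 => derivOfCothMul (derivOfComp (oddDerivPoly d))

theorem coeff_oddDerivPoly_zero (d : ℕ) : (oddDerivPoly d).coeff 0 = 0 := by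
  cases d with
  | zero => simp [oddDerivPoly]
  | succ d => exact coeff_derivOfCothMul_zero _

theorem natDegree_oddDerivPoly_le (d : ℕ) : (oddDerivPoly d).natDegree ≤ d + 1 := by
  induction d with
  | zero => simp [oddDerivPoly]
  | succ d ih => exact natDegree_derivOfCothMul_le (natDegree_derivOfComp_le ih)

theorem iteratedDeriv_odd_two_div_exp_two_mul_sub_one_eqOn (d : ℕ) :
    Set.EqOn (iteratedDeriv (2 * d + 1) (fun x : ℝ => 2 / (exp (2 * x) - 1)))
      (fun x => aeval (sinh x ^ 2)⁻¹ (oddDerivPoly d)) {0}ᶜ := by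
  induction d with
  | zero =>
    refine iteratedDeriv_succ_eqOn_of_hasDerivAt isOpen_compl_singleton
      (fun x hx => two_div_exp_two_mul_sub_one_eq hx) fun x hx => ?_
    simpa [oddDerivPoly] using (hasDerivAt_coth hx).sub_const 1
  | succ d ih =>
    have heven := iteratedDeriv_succ_eqOn_of_hasDerivAt isOpen_compl_singleton ih
      fun x hx => hasDerivAt_aeval_inv_sinh_sq _ hx
    exact iteratedDeriv_succ_eqOn_of_hasDerivAt isOpen_compl_singleton heven
      fun x hx => hasDerivAt_coth_mul_aeval_inv_sinh_sq _ hx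

theorem symmetric_time_combination_integral_coeffs
    (d : ℕ) :
    ∃ q : ℕ → ℤ, ∀ l : ℝ, l ≠ 0 →
      (Real.exp l - Real.exp (-l))⁻¹ *
          iteratedDeriv (2 * d + 1) (fun x : ℝ => 2 / (Real.exp (2 * x) - 1)) l =
        ∑ j ∈ Finset.Icc 1 (d + 1),
          (q j : ℝ) / (Real.exp l - Real.exp (-l)) ^ (2 * j + 1) := by
  refine ⟨fun j => (oddDerivPoly d).coeff j * 4 ^ j, fun l hl => ?_⟩
  have hs := sinh_ne_zero.2 hl
  have h2s : exp l - exp (-l) = 2 * sinh l := by rw [sinh_eq]; ring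
  have hsub : Finset.Icc 1 (d + 1) ⊆ Finset.range (d + 2) := fun j hj => by
    simp only [Finset.mem_Icc, Finset.mem_range] at hj ⊢; omega
  rw [iteratedDeriv_odd_two_div_exp_two_mul_sub_one_eqOn d hl, h2s]
  beta_reduce
  rw [aeval_eq_sum_range' (Nat.lt_succ_of_le (natDegree_oddDerivPoly_le d)),
    ← Finset.sum_subset hsub fun j _ hj => ?_, Finset.mul_sum]
  · refine Finset.sum_congr rfl fun j _ => ?_
    rw [zsmul_eq_mul, inv_pow, ← pow_mul, Int.cast_mul, Int.cast_pow, Int.cast_ofNat,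
      show (4 : ℝ) = 2 ^ 2 by norm_num, ← pow_mul]
    field_simp
    ring
  · obtain rfl : j = 0 := by simp only [Finset.mem_Icc, Finset.mem_range] at *; omega
    rw [coeff_oddDerivPoly_zero, zero_smul]
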